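/- arXiv:2605.29816 — 2 statements merged into one kernel-verified Lean document; each statement's English description precedes it below -/
import Mathlib

section
/- Let X be a real random variable with X ∈ [-c,c] almost surely, mean μ, and variance ν. Set γ = (2/3)cκ for κ > 0 and ξ_B = γ + √(γ² + 2κν). If ρ ≥ -μ + ξ_B, then P(X ≤ -ρ) ≤ e^{-κ}. -/
/-!
Rather than Bernstein's inequality itself, the proof uses Cantelli's one-sided Chebyshev bound
`P(X ≤ μ - t) ≤ ν / (ν + t²)` with `t = μ + ρ ≥ ξ_B`. It remains to check `ν (e^κ - 1) ≤ ξ_B²`.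
If `κ > 3/2` then `ξ_B ≥ 2γ > 2c`, so `-ρ < -c` and the event is null. For `κ ≤ 3/2` one has
`e^κ ≤ 1 + 2κ + (8/9)κ²`, and with Popoviciu's bound `ν ≤ c²` this gives
`ν (e^κ - 1) ≤ 2κν + 2γ² ≤ ξ_B²`.
-/

open Real MeasureTheory ProbabilityTheory

theorem Real.exp_le_one_add_two_mul_add_sq {k : ℝ} (h0 : 0 ≤ k) (h1 : k ≤ 3 / 2) :
    exp k ≤ 1 + 2 * k + 8 / 9 * k ^ 2 := by
  -- the Padé bound `(2 + k) / (2 - k)` for `exp k` itself is too weak at `k = 3/2`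
  have hhalf : exp (k / 2) ≤ (4 + k) / (4 - k) := by
    convert exp_le_two_add_div_two_sub (x := k / 2) (by linarith) (by linarith) using 1
    field_simp
    norm_num
  calc exp k = exp (k / 2) ^ 2 := by rw [← exp_nat_mul]; ring_nf
    _ ≤ ((4 + k) / (4 - k)) ^ 2 := by gcongr
    _ ≤ 1 + 2 * k + 8 / 9 * k ^ 2 := by
      rw [div_pow, div_le_iff₀ (by nlinarith)]
      nlinarith [mul_nonneg h0 (mul_nonneg h0 h0), mul_nonneg (mul_nonneg h0 h0) (sub_nonneg.2 h1),
        mul_nonneg h0 (sub_nonneg.2 h1)]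

theorem Real.le_sqrt_sq_add (x : ℝ) {a : ℝ} (ha : 0 ≤ a) : x ≤ √(x ^ 2 + a) :=
  (le_abs_self x).trans (abs_le_sqrt (by linarith))

theorem Real.two_mul_sq_add_le_add_sqrt_sq {x a : ℝ} (hx : 0 ≤ x) (ha : 0 ≤ a) :
    2 * x ^ 2 + a ≤ (x + √(x ^ 2 + a)) ^ 2 := by
  have hsq : √(x ^ 2 + a) ^ 2 = x ^ 2 + a := sq_sqrt (by positivity)
  nlinarith [sqrt_nonneg (x ^ 2 + a)]

theorem div_add_sq_le_exp_neg {c κ v t : ℝ} (hc : 0 ≤ c) (hκ : 0 ≤ κ) (hκ' : κ ≤ 3 / 2)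
    (hv : 0 ≤ v) (hvc : v ≤ c ^ 2)
    (ht : 2 / 3 * c * κ + √((2 / 3 * c * κ) ^ 2 + 2 * κ * v) ≤ t) :
    v / (v + t ^ 2) ≤ exp (-κ) := by
  set ξ := 2 / 3 * c * κ + √((2 / 3 * c * κ) ^ 2 + 2 * κ * v)
  have hξ : 0 ≤ ξ := by positivity
  have hξsq : 8 / 9 * κ ^ 2 * c ^ 2 + 2 * κ * v ≤ ξ ^ 2 := calc
    _ = 2 * (2 / 3 * c * κ) ^ 2 + 2 * κ * v := by ring
    _ ≤ ξ ^ 2 := Real.two_mul_sq_add_le_add_sqrt_sq (by positivity) (by positivity)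
  have key : v * exp κ ≤ v + t ^ 2 := calc
    v * exp κ ≤ v * (1 + 2 * κ + 8 / 9 * κ ^ 2) :=
      mul_le_mul_of_nonneg_left (exp_le_one_add_two_mul_add_sq hκ hκ') hv
    _ ≤ v + (8 / 9 * κ ^ 2 * c ^ 2 + 2 * κ * v) := by nlinarith
    _ ≤ v + t ^ 2 := by gcongr; exact hξsq.trans (pow_le_pow_left₀ hξ ht 2)
  rcases (add_nonneg hv (sq_nonneg t)).eq_or_lt with h | h
  · rw [← h, div_zero]; positivity
  · rw [div_le_iff₀ h, exp_neg, ← div_eq_inv_mul, le_div_iff₀ (exp_pos κ)]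
    exact key

namespace ProbabilityTheory

variable {Ω : Type*} {mΩ : MeasurableSpace Ω} {μ : Measure Ω} [IsProbabilityMeasure μ]

theorem integral_const_sub_add_sq {X : Ω → ℝ} (hX : MemLp X 2 μ) (u : ℝ) :
    μ[fun ω ↦ (μ[X] - X ω + u) ^ 2] = Var[X; μ] + u ^ 2 := by
  have hZ : MemLp (fun ω ↦ μ[X] - X ω) 2 μ := (memLp_const _).sub hX
  have hvar : Var[fun ω ↦ μ[X] - X ω + u; μ] = Var[X; μ] := by
    rw [variance_add_const hZ.aestronglyMeasurable, variance_const_sub hX.aestronglyMeasurable]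
  have hmean : μ[fun ω ↦ μ[X] - X ω + u] = u := by
    rw [integral_add (hZ.integrable one_le_two) (integrable_const _),
      integral_sub (integrable_const _) (hX.integrable one_le_two)]
    simp
  have hY : MemLp (fun ω ↦ μ[X] - X ω + u) 2 μ := hZ.add (memLp_const u)
  have := variance_eq_sub hY
  rw [hvar, hmean] at this
  simp only [Pi.pow_apply] at this
  linarith

/-- **Cantelli's inequality**. -/
theorem measureReal_le_integral_sub_le_variance_div {X : Ω → ℝ} (hX : MemLp X 2 μ) {t : ℝ}
    (ht : 0 < t) :
    μ.real {ω | X ω ≤ μ[X] - t} ≤ Var[X; μ] / (Var[X; μ] + t ^ 2) := by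
  set v := Var[X; μ]
  have hv : 0 ≤ v := variance_nonneg X μ
  -- Markov's inequality for `(μ[X] - X + u) ^ 2`, with the optimal shift `u = v / t`
  obtain ⟨u, hu, htu⟩ : ∃ u, 0 ≤ u ∧ t * u = v := ⟨v / t, by positivity, by field_simp⟩
  have hsub : {ω | X ω ≤ μ[X] - t} ⊆ {ω | (t + u) ^ 2 ≤ (μ[X] - X ω + u) ^ 2} := by
    intro ω (hω : X ω ≤ μ[X] - t)
    show (t + u) ^ 2 ≤ (μ[X] - X ω + u) ^ 2
    gcongr
    linarith
  have hY : MemLp (fun ω ↦ μ[X] - X ω + u) 2 μ := ((memLp_const _).sub hX).add (memLp_const _)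
  have markov := mul_meas_ge_le_integral_of_nonneg (ae_of_all μ fun ω ↦ sq_nonneg _)
    hY.integrable_sq ((t + u) ^ 2)
  rw [integral_const_sub_add_sq hX u] at markov
  set P := μ.real {ω | X ω ≤ μ[X] - t}
  have hP : (t + u) ^ 2 * P ≤ v + u ^ 2 :=
    (mul_le_mul_of_nonneg_left (measureReal_mono hsub) (by positivity)).trans markov
  have hP' : (v + t ^ 2) * (P * (v + t ^ 2)) ≤ (v + t ^ 2) * v := calc
    _ = t ^ 2 * ((t + u) ^ 2 * P) := by rw [← htu]; ring
    _ ≤ t ^ 2 * (v + u ^ 2) := by gcongr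
    _ = (v + t ^ 2) * v := by rw [← htu]; ring
  rw [le_div_iff₀ (by positivity)]
  exact le_of_mul_le_mul_left hP' (by positivity)

end ProbabilityTheory

/-- Bernstein-based margin certificate: if `X ∈ [-c, c]` almost surely with
mean `μX` and variance `ν`, and with `γ = (2/3) c κ`,
`ξ_B = γ + √(γ² + 2κν)`, the condition `ρ ≥ -μX + ξ_B` implies
`P(X ≤ -ρ) ≤ e^{-κ}`. -/
theorem bernstein_margin_certificate
    {Ω : Type*} [MeasureSpace Ω] (μ : Measure Ω) [IsProbabilityMeasure μ]
    (X : Ω → ℝ) (hX : Measurable X)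
    (c : ℝ) (hc : 0 < c) (hbdd : ∀ᵐ ω ∂μ, X ω ∈ Set.Icc (-c) c)
    (μX : ℝ) (hμX : μX = ∫ ω, X ω ∂μ)
    (ν : ℝ) (hν : ν = variance X μ)
    (κ : ℝ) (hκ : 0 < κ)
    (γ : ℝ) (hγ : γ = 2 / 3 * c * κ)
    (ξB : ℝ) (hξB : ξB = γ + Real.sqrt (γ ^ 2 + 2 * κ * ν))
    (ρ : ℝ) (hρ : -μX + ξB ≤ ρ) :
    (μ {ω | X ω ≤ -ρ}).toReal ≤ Real.exp (-κ) := by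
  subst hμX hν hγ hξB
  have hmem : MemLp X 2 μ := memLp_of_bounded hbdd hX.aestronglyMeasurable 2
  have hmean : μ[X] ≤ c :=
    (Convex.integral_mem (convex_Icc _ _) isClosed_Icc hbdd (hmem.integrable one_le_two)).2
  have hvar : Var[X; μ] ≤ c ^ 2 := by
    convert variance_le_sq_of_bounded hbdd hX.aemeasurable using 1; ring
  have hξ : 2 * (2 / 3 * c * κ) ≤ 2 / 3 * c * κ + √((2 / 3 * c * κ) ^ 2 + 2 * κ * Var[X; μ]) := by
    have := Real.le_sqrt_sq_add (2 / 3 * c * κ) (a := 2 * κ * Var[X; μ])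
      (mul_nonneg (by positivity) (variance_nonneg X μ))
    linarith
  have hγ : 0 < 2 / 3 * c * κ := by positivity
  rcases le_or_gt κ (3 / 2) with hκ' | hκ'
  · calc (μ {ω | X ω ≤ -ρ}).toReal = μ.real {ω | X ω ≤ μ[X] - (μ[X] + ρ)} := by
          simp [measureReal_def]
      _ ≤ Var[X; μ] / (Var[X; μ] + (μ[X] + ρ) ^ 2) :=
        measureReal_le_integral_sub_le_variance_div hmem (by linarith)
      _ ≤ exp (-κ) :=
        div_add_sq_le_exp_neg hc.le hκ.le hκ' (variance_nonneg X μ) hvar (by linarith)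
  · have hnull : μ {ω | X ω ≤ -ρ} = 0 := by
      rw [measure_eq_zero_iff_ae_notMem]
      filter_upwards [hbdd] with ω hω (h : X ω ≤ -ρ)
      nlinarith [hω.1]
    simp [hnull, (exp_pos _).le]
end

section
/- Consider a fixed example (x,y) with margin function ρ(·,y) and margin shift f(x,y,δx) = ρ(x+δx,y) - ρ(x,y) satisfying |f(x,y,δx)| ≤ c for δx in a box 𝓑. Let P_D be a perturbation distribution dominated on 𝓑 by the uniform distribution P_u with constants C, V_𝓑, ε_𝓑 (as in the box-domination assumption), let μ_u and ν_u be the mean and variance of f(x,y,δx) under P_u, let φ ∈ (ε_𝓑, 1), κ = ln(C·V_𝓑/(φ - ε_𝓑)), γ = (2/3)cκ, ξ_H = c√(2κ), ξ_B = γ + √(γ² + 2κν_u). If ρ(x,y) > -μ_u + min{ξ_H, ξ_B}, then P_D(ρ(x + δx, y) > 0) ≥ 1 - φ. -/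
/-!
The bad event `ρ(x + δx) ≤ 0` is the lower tail `f ≤ μ_u - (μ_u + ρ(x))` of the margin shift `f`.
Off the box it has `P_D`-mass at most `ε_𝓑`; on the box, domination bounds its mass by `C V_𝓑`
times its `P_u`-mass. Under `P_u` the shift takes values in `[-c, c]`, so Hoeffding's lemma and
Bernstein's inequality (with `|f - μ_u| ≤ 2c` and variance `ν_u`) bound that tail by
`exp (-κ) = (φ - ε_𝓑) / (C V_𝓑)` as soon as the deviation `μ_u + ρ(x)` exceeds `ξ_H`, resp. `ξ_B`.
The two parts add up to at most `φ`.
-/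

open Real MeasureTheory ProbabilityTheory

open scoped Nat in
lemma Nat.two_mul_three_pow_le_factorial (k : ℕ) : 2 * 3 ^ k ≤ (k + 2)! := by
  induction k with
  | zero => simp
  | succ k ih =>
    rw [Nat.factorial_succ, pow_succ]
    nlinarith

open scoped Nat in
lemma Real.exp_le_one_add_add_sq_div {s S : ℝ} (hs : |s| ≤ S) (hS : S < 3) :
    exp s ≤ 1 + s + s ^ 2 / (2 * (1 - S / 3)) := by
  have hS0 : 0 ≤ S := (abs_nonneg s).trans hs
  have hexp : HasSum (fun n ↦ s ^ n / n !) (exp s) := by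
    simpa [Real.exp_eq_exp_ℝ] using NormedSpace.expSeries_div_hasSum_exp s
  have htail : HasSum (fun k ↦ s ^ (k + 2) / (k + 2)!) (exp s - (1 + s)) := by
    simpa [Finset.sum_range_succ] using (hasSum_nat_add_iff' 2).2 hexp
  have hgeom : HasSum (fun k ↦ s ^ 2 / 2 * (S / 3) ^ k) (s ^ 2 / 2 * (1 - S / 3)⁻¹) :=
    (hasSum_geometric_of_lt_one (by positivity) (by linarith)).mul_left _
  have hterm (k : ℕ) : s ^ (k + 2) / (k + 2)! ≤ s ^ 2 / 2 * (S / 3) ^ k := by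
    have hfact : (2 * 3 ^ k : ℝ) ≤ (k + 2)! := by exact_mod_cast Nat.two_mul_three_pow_le_factorial k
    have hpow : s ^ (k + 2) ≤ s ^ 2 * S ^ k := by
      calc s ^ (k + 2) ≤ |s| ^ (k + 2) := (le_abs_self _).trans (abs_pow s _).le
        _ = s ^ 2 * |s| ^ k := by rw [pow_add, sq_abs, mul_comm]
        _ ≤ s ^ 2 * S ^ k := by gcongr
    calc s ^ (k + 2) / (k + 2)! ≤ s ^ 2 * S ^ k / (2 * 3 ^ k) := by gcongr
      _ = s ^ 2 / 2 * (S / 3) ^ k := by rw [div_pow]; ring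
  calc exp s = 1 + s + (exp s - (1 + s)) := by ring
    _ ≤ 1 + s + s ^ 2 / 2 * (1 - S / 3)⁻¹ := by gcongr; exact hasSum_le hterm htail hgeom
    _ = 1 + s + s ^ 2 / (2 * (1 - S / 3)) := by rw [← div_div, div_eq_mul_inv (s ^ 2 / 2)]

section Bernstein

variable {Ω : Type*} [MeasurableSpace Ω] {P : Measure Ω} [IsProbabilityMeasure P] {Y : Ω → ℝ}
  {M ν : ℝ}

lemma mgf_le_exp_of_abs_le (hY : AEMeasurable Y P) (hbdd : ∀ᵐ ω ∂P, |Y ω| ≤ M)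
    (hmean : P[Y] = 0) (hsq : ∫ ω, Y ω ^ 2 ∂P = ν) {t : ℝ} (ht : 0 ≤ t) (htM : t * M < 3) :
    mgf Y P t ≤ exp (ν * t ^ 2 / (2 * (1 - t * M / 3))) := by
  set q := t ^ 2 / (2 * (1 - t * M / 3))
  have hIcc : ∀ᵐ ω ∂P, Y ω ∈ Set.Icc (-M) M := by
    filter_upwards [hbdd] with ω hω using abs_le.1 hω
  have hYint : Integrable Y P := .of_mem_Icc _ _ hY hIcc
  have hY2int : Integrable (fun ω ↦ Y ω ^ 2) P :=
    (MemLp.of_bound hY.aestronglyMeasurable M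
      (by simpa only [norm_eq_abs] using hbdd)).integrable_sq
  have hpoint : ∀ᵐ ω ∂P, exp (t * Y ω) ≤ 1 + t * Y ω + q * Y ω ^ 2 := by
    filter_upwards [hbdd] with ω hω
    have hs : |t * Y ω| ≤ t * M := by rw [abs_mul, abs_of_nonneg ht]; gcongr
    convert exp_le_one_add_add_sq_div hs htM using 2
    ring
  have hlin : Integrable (fun ω ↦ 1 + t * Y ω) P := (integrable_const 1).add (hYint.const_mul t)
  have hmajorant : ∫ ω, (1 + t * Y ω + q * Y ω ^ 2) ∂P = 1 + ν * q := by
    rw [integral_add hlin (hY2int.const_mul q), integral_add (integrable_const 1)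
      (hYint.const_mul t), integral_const_mul, integral_const_mul, hmean, hsq]
    simp only [integral_const, probReal_univ, smul_eq_mul, mul_one, mul_zero, add_zero]
    ring
  calc mgf Y P t ≤ ∫ ω, (1 + t * Y ω + q * Y ω ^ 2) ∂P :=
        integral_mono_ae (integrable_exp_mul_of_mem_Icc hY hIcc)
          (hlin.add (hY2int.const_mul q)) hpoint
    _ ≤ exp (ν * q) := hmajorant ▸ by linarith [add_one_le_exp (ν * q)]
    _ = exp (ν * t ^ 2 / (2 * (1 - t * M / 3))) := by rw [mul_div_assoc]

lemma measureReal_ge_le_exp_bernstein (hY : AEMeasurable Y P) (hbdd : ∀ᵐ ω ∂P, |Y ω| ≤ M)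
    (hmean : P[Y] = 0) (hsq : ∫ ω, Y ω ^ 2 ∂P = ν) {ε : ℝ} (hε : 0 < ε) :
    P.real {ω | ε ≤ Y ω} ≤ exp (-ε ^ 2 / (2 * (ν + M * ε / 3))) := by
  have hY2int : Integrable (fun ω ↦ Y ω ^ 2) P :=
    (MemLp.of_bound hY.aestronglyMeasurable M
      (by simpa only [norm_eq_abs] using hbdd)).integrable_sq
  rcases (hsq ▸ integral_nonneg fun ω ↦ sq_nonneg (Y ω) : 0 ≤ ν).eq_or_lt with rfl | hν
  · have hY0 : (fun ω ↦ Y ω ^ 2) =ᵐ[P] 0 :=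
      (integral_eq_zero_iff_of_nonneg (fun ω ↦ sq_nonneg (Y ω)) hY2int).1 hsq
    have hnull : P {ω | ε ≤ Y ω} = 0 := by
      refine measure_eq_zero_iff_ae_notMem.2 ?_
      filter_upwards [hY0] with ω hω
      simp only [Pi.zero_apply, pow_eq_zero_iff two_ne_zero] at hω
      simpa [hω] using hε
    rw [measureReal_def, hnull, ENNReal.toReal_zero]
    positivity
  have hM : 0 ≤ M := by
    obtain ⟨ω, hω⟩ := hbdd.exists
    exact (abs_nonneg _).trans hω
  set D := ν + M * ε / 3 with hD_def
  have hD : 0 < D := by positivity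
  have hIcc : ∀ᵐ ω ∂P, Y ω ∈ Set.Icc (-M) M := by
    filter_upwards [hbdd] with ω hω using abs_le.1 hω
  have htM : ε / D * M < 3 := by
    rw [div_mul_eq_mul_div, div_lt_iff₀ hD]
    linarith
  calc P.real {ω | ε ≤ Y ω} ≤ exp (-(ε / D) * ε) * mgf Y P (ε / D) :=
        measure_ge_le_exp_mul_mgf ε (by positivity) (integrable_exp_mul_of_mem_Icc hY hIcc)
    _ ≤ exp (-(ε / D) * ε) * exp (ν * (ε / D) ^ 2 / (2 * (1 - ε / D * M / 3))) := by
        gcongr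
        exact mgf_le_exp_of_abs_le hY hbdd hmean hsq (by positivity) htM
    _ = exp (-ε ^ 2 / (2 * D)) := by
        rw [← exp_add]
        congr 1
        rw [hD_def]
        field_simp
        ring

end Bernstein

section MarginShift

variable {Ω : Type*} [MeasurableSpace Ω] {P : Measure Ω} {g : Ω → ℝ} {c κ t : ℝ}

lemma measureReal_le_sub_le_exp_neg_of_hoeffding [IsProbabilityMeasure P]
    (hg : AEMeasurable g P) (hbdd : ∀ᵐ ω ∂P, |g ω| ≤ c) (hc : 0 < c) (hκ : 0 ≤ κ)
    (ht : c * √(2 * κ) ≤ t) :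
    P.real {ω | g ω ≤ P[g] - t} ≤ exp (-κ) := by
  have hsubG : HasSubgaussianMGF (fun ω ↦ -g ω - P[-g]) ((‖c - -c‖₊ / 2) ^ 2) P :=
    hasSubgaussianMGF_of_mem_Icc hg.neg <| by
      filter_upwards [hbdd] with ω hω
      exact ⟨by linarith [(abs_le.1 hω).2], by linarith [(abs_le.1 hω).1]⟩
  have hparam : (((‖c - -c‖₊ / 2) ^ 2 : NNReal) : ℝ) = c ^ 2 := by
    simp [← two_mul, abs_of_pos hc]
  have hset : {ω | g ω ≤ P[g] - t} = {ω | t ≤ -g ω - P[-g]} := by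
    ext ω
    simp only [Set.mem_ofPred_eq, Pi.neg_apply, integral_neg]
    constructor <;> intro h <;> linarith
  have ht0 : 0 ≤ t := (by positivity : 0 ≤ c * √(2 * κ)).trans ht
  have hsq : 2 * κ * c ^ 2 ≤ t ^ 2 := by
    calc 2 * κ * c ^ 2 = (c * √(2 * κ)) ^ 2 := by rw [mul_pow, sq_sqrt (by positivity)]; ring
      _ ≤ t ^ 2 := by gcongr
  rw [hset]
  refine (hsubG.measure_ge_le ht0).trans (exp_le_exp.2 ?_)
  rw [hparam, neg_div, neg_le_neg_iff, le_div_iff₀ (by positivity)]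
  linarith

lemma measureReal_le_sub_le_exp_neg_of_bernstein [IsProbabilityMeasure P]
    (hg : AEMeasurable g P) (hbdd : ∀ᵐ ω ∂P, |g ω| ≤ c) (hc : 0 < c) (hκ : 0 ≤ κ)
    (ht : 2 / 3 * c * κ + √((2 / 3 * c * κ) ^ 2 + 2 * κ * Var[g; P]) < t) :
    P.real {ω | g ω ≤ P[g] - t} ≤ exp (-κ) := by
  set r := √((2 / 3 * c * κ) ^ 2 + 2 * κ * Var[g; P])
  have hr : r ^ 2 = (2 / 3 * c * κ) ^ 2 + 2 * κ * Var[g; P] :=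
    sq_sqrt (by have := variance_nonneg g P; positivity)
  have hr0 : 0 ≤ r := sqrt_nonneg _
  have hgint : Integrable g P :=
    .of_mem_Icc (-c) c hg (by simpa only [Set.mem_Icc, abs_le] using hbdd)
  have hmean_le : |P[g]| ≤ c := by
    have := norm_integral_le_of_norm_le_const (f := g) (by simpa only [norm_eq_abs] using hbdd)
    rwa [probReal_univ, mul_one, norm_eq_abs] at this
  have hbdd' : ∀ᵐ ω ∂P, |P[g] - g ω| ≤ 2 * c := by
    filter_upwards [hbdd] with ω hω
    linarith [abs_sub (P[g]) (g ω)]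
  have hmean : P[fun ω ↦ P[g] - g ω] = 0 := by
    rw [integral_sub (integrable_const _) hgint]
    simp
  have hvar : ∫ ω, (P[g] - g ω) ^ 2 ∂P = Var[g; P] := by
    rw [variance_eq_integral hg]
    congr 1 with ω
    ring
  have ht0 : 0 < t := lt_of_le_of_lt (by positivity) ht
  have hset : {ω | g ω ≤ P[g] - t} = {ω | t ≤ P[g] - g ω} := by
    ext ω
    simp only [Set.mem_ofPred_eq]
    constructor <;> intro h <;> linarith
  rw [hset]
  refine (measureReal_ge_le_exp_bernstein (Y := fun ω ↦ P[g] - g ω) (aemeasurable_const.sub hg)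
    hbdd' hmean hvar ht0).trans (exp_le_exp.2 ?_)
  have hV := variance_nonneg g P
  rw [neg_div, neg_le_neg_iff, le_div_iff₀ (by positivity)]
  -- `t - 2cκ/3 > r` squares to `t² > 2κ (Var[g] + 2ct/3)`
  nlinarith

lemma measureReal_le_sub_le_exp_neg [IsProbabilityMeasure P]
    (hg : AEMeasurable g P) (hbdd : ∀ᵐ ω ∂P, |g ω| ≤ c) (hc : 0 < c) (hκ : 0 ≤ κ)
    (ht : min (c * √(2 * κ)) (2 / 3 * c * κ + √((2 / 3 * c * κ) ^ 2 + 2 * κ * Var[g; P])) < t) :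
    P.real {ω | g ω ≤ P[g] - t} ≤ exp (-κ) := by
  rcases min_lt_iff.1 ht with hH | hB
  · exact measureReal_le_sub_le_exp_neg_of_hoeffding hg hbdd hc hκ hH.le
  · exact measureReal_le_sub_le_exp_neg_of_bernstein hg hbdd hc hκ hB

end MarginShift

lemma ofReal_mul_measure_le_sub_le {Ω : Type*} [MeasurableSpace Ω] {P : Measure Ω}
    [IsZeroOrProbabilityMeasure P] {g : Ω → ℝ} {c t K η : ℝ} (hg : AEMeasurable g P)
    (hbdd : ∀ᵐ ω ∂P, |g ω| ≤ c) (hc : 0 < c) (hη : 0 < η)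
    (ht : min (c * √(2 * log (K / η))) (2 / 3 * c * log (K / η) +
      √((2 / 3 * c * log (K / η)) ^ 2 + 2 * log (K / η) * Var[g; P])) < t) :
    ENNReal.ofReal K * P {ω | g ω ≤ P[g] - t} ≤ ENNReal.ofReal η := by
  rcases le_or_gt K η with hKη | hηK
  · calc ENNReal.ofReal K * P {ω | g ω ≤ P[g] - t} ≤ ENNReal.ofReal K * 1 := by
          gcongr; exact prob_le_one
      _ ≤ ENNReal.ofReal η := by rw [mul_one]; exact ENNReal.ofReal_le_ofReal hKη
  rcases eq_zero_or_isProbabilityMeasure P with rfl | hP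
  · simp
  have hK : 0 < K := hη.trans hηK
  have hκ : 0 < log (K / η) := log_pos ((one_lt_div hη).2 hηK)
  have hexp : exp (-log (K / η)) = η / K := by
    rw [exp_neg, exp_log (by positivity), inv_div]
  have htail : P {ω | g ω ≤ P[g] - t} ≤ ENNReal.ofReal (η / K) := by
    rw [ENNReal.le_ofReal_iff_toReal_le (measure_ne_top _ _) (by positivity), ← hexp]
    exact measureReal_le_sub_le_exp_neg hg hbdd hc hκ.le ht
  calc ENNReal.ofReal K * P {ω | g ω ≤ P[g] - t}
      _ ≤ ENNReal.ofReal K * ENNReal.ofReal (η / K) := by gcongr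
      _ = ENNReal.ofReal η := by
          rw [← ENNReal.ofReal_mul hK.le, mul_div_cancel₀ _ hK.ne']

lemma measure_le_ofReal_of_dominated {α : Type*} [MeasurableSpace α] {PD Pu : Measure α}
    {A B : Set α} {K ε φ : ℝ} (hdom : PD (A ∩ B) ≤ ENNReal.ofReal K * Pu (A ∩ B))
    (hout : PD (A ∩ Bᶜ) ≤ ENNReal.ofReal ε) (hε : 0 ≤ ε) (hεφ : ε ≤ φ)
    (hA : ENNReal.ofReal K * Pu A ≤ ENNReal.ofReal (φ - ε)) :
    PD A ≤ ENNReal.ofReal φ :=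
  calc PD A ≤ PD (A ∩ B) + PD (A ∩ Bᶜ) := by
        conv_lhs => rw [← Set.inter_union_compl A B]
        exact measure_union_le _ _
    _ ≤ ENNReal.ofReal K * Pu A + ENNReal.ofReal ε := by
        gcongr
        exact hdom.trans (by gcongr; exact Set.inter_subset_left)
    _ ≤ ENNReal.ofReal (φ - ε) + ENNReal.ofReal ε := by gcongr
    _ = ENNReal.ofReal φ := by rw [← ENNReal.ofReal_add (by linarith) hε, sub_add_cancel]

theorem boxed_samplewise_perturbation_certificate_general
    (n : ℕ) (l u : Fin n → ℝ)
    (𝓑 : Set (EuclideanSpace ℝ (Fin n)))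
    (h𝓑 : 𝓑 = WithLp.ofLp ⁻¹' (Set.univ.pi fun i => Set.Icc (l i) (u i)))
    (V𝓑 : ℝ)
    (PD Pu : Measure (EuclideanSpace ℝ (Fin n)))
    [IsProbabilityMeasure PD]
    (hPu : Pu = (volume 𝓑)⁻¹ • volume.restrict 𝓑)
    (C : ℝ) (ε𝓑 : ℝ) (hε : ε𝓑 ∈ Set.Ioo (0 : ℝ) 1)
    (hdom : ∀ A : Set (EuclideanSpace ℝ (Fin n)), MeasurableSet A →
      PD (A ∩ 𝓑) ≤ ENNReal.ofReal (C * V𝓑) * Pu (A ∩ 𝓑))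
    (hout : ∀ A : Set (EuclideanSpace ℝ (Fin n)), MeasurableSet A →
      PD (A ∩ 𝓑ᶜ) ≤ ENNReal.ofReal ε𝓑)
    (ρ : EuclideanSpace ℝ (Fin n) → ℝ) (hρmeas : Measurable ρ)
    (x : EuclideanSpace ℝ (Fin n))
    (c : ℝ) (hc : 0 < c)
    (hbdd : ∀ δx ∈ 𝓑, |ρ (x + δx) - ρ x| ≤ c)
    (μu : ℝ) (hμu : μu = ∫ δx, (ρ (x + δx) - ρ x) ∂Pu)
    (νu : ℝ) (hνu : νu = variance (fun δx => ρ (x + δx) - ρ x) Pu)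
    (φ : ℝ) (hφ : φ ∈ Set.Ioo ε𝓑 1)
    (κ : ℝ) (hκ : κ = Real.log (C * V𝓑 / (φ - ε𝓑)))
    (γ : ℝ) (hγ : γ = 2 / 3 * c * κ)
    (ξH : ℝ) (hξH : ξH = c * Real.sqrt (2 * κ))
    (ξB : ℝ) (hξB : ξB = γ + Real.sqrt (γ ^ 2 + 2 * κ * νu))
    (hmargin : -μu + min ξH ξB < ρ x) :
    1 - φ ≤ (PD {δx | 0 < ρ (x + δx)}).toReal := by
  subst hμu hνu hκ hγ hξH hξB
  have h𝓑meas : MeasurableSet 𝓑 :=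
    h𝓑 ▸ (MeasurableSet.univ_pi fun _ ↦ measurableSet_Icc).preimage (WithLp.measurable_ofLp 2 _)
  have : IsZeroOrProbabilityMeasure Pu :=
    hPu ▸ inferInstanceAs (IsZeroOrProbabilityMeasure volume[|𝓑])
  have hshift : Measurable fun δx ↦ ρ (x + δx) := hρmeas.comp (measurable_const_add x)
  have hbddPu : ∀ᵐ δx ∂Pu, |ρ (x + δx) - ρ x| ≤ c :=
    hPu ▸ Measure.ae_smul_measure ((ae_restrict_iff' h𝓑meas).2 (ae_of_all _ hbdd)) _
  set A := {δx | ρ (x + δx) ≤ 0}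
  have hA : MeasurableSet A := measurableSet_le hshift measurable_const
  have hPuA : ENNReal.ofReal (C * V𝓑) * Pu A ≤ ENNReal.ofReal (φ - ε𝓑) := by
    convert ofReal_mul_measure_le_sub_le (hshift.sub_const _).aemeasurable hbddPu hc
      (sub_pos.2 hφ.1) (neg_add_lt_iff_lt_add.1 hmargin) using 3
    ext δx
    simp only [A, Set.mem_ofPred_eq]
    constructor <;> intro h <;> linarith
  have hPDA : PD.real A ≤ φ := ENNReal.toReal_le_of_le_ofReal (by linarith [hε.1, hφ.1])
    (measure_le_ofReal_of_dominated (hdom A hA) (hout A hA) hε.1.le hφ.1.le hPuA)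
  have hcompl : {δx | 0 < ρ (x + δx)} = Aᶜ := by ext; simp [A]
  rw [hcompl, ← measureReal_def, probReal_compl_eq_one_sub hA]
  linarith

/-- Per-example margin robustness certificate (Theorem `boxed_samplewise_pert`):
for a fixed example with clean margin `ρ(x,y)` and margin shift
`f(δx) = ρ(x+δx,y) - ρ(x,y)` bounded by `c` on a box `𝓑`, if the perturbation
distribution `P_D` is dominated on `𝓑` by the uniform distribution `P_u`
(with constants `C, V_𝓑, ε_𝓑`), `μ_u, ν_u` are the mean and variance of the
margin shift under `P_u`, `φ ∈ (ε_𝓑, 1)`, `κ = ln(C V_𝓑/(φ - ε_𝓑))`,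
`γ = (2/3) c κ`, `ξ_H = c √(2κ)`, `ξ_B = γ + √(γ² + 2κ ν_u)`, then
`ρ(x,y) > -μ_u + min{ξ_H, ξ_B}` implies `P_D(ρ(x+δx,y) > 0) ≥ 1 - φ`. -/
theorem boxed_samplewise_perturbation_certificate
    (n : ℕ) (l u : Fin n → ℝ) (hlu : ∀ i, l i < u i)
    (𝓑 : Set (EuclideanSpace ℝ (Fin n)))
    (h𝓑 : 𝓑 = WithLp.ofLp ⁻¹' (Set.univ.pi fun i => Set.Icc (l i) (u i)))
    (V𝓑 : ℝ) (hV : V𝓑 = ∏ i, (u i - l i))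
    (PD Pu : Measure (EuclideanSpace ℝ (Fin n)))
    [IsProbabilityMeasure PD]
    (hPu : Pu = (volume 𝓑)⁻¹ • volume.restrict 𝓑)
    (C : ℝ) (hC : 0 ≤ C) (ε𝓑 : ℝ) (hε : ε𝓑 ∈ Set.Ioo (0 : ℝ) 1)
    (hdom : ∀ A : Set (EuclideanSpace ℝ (Fin n)), MeasurableSet A →
      PD (A ∩ 𝓑) ≤ ENNReal.ofReal (C * V𝓑) * Pu (A ∩ 𝓑))
    (hout : ∀ A : Set (EuclideanSpace ℝ (Fin n)), MeasurableSet A →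
      PD (A ∩ 𝓑ᶜ) ≤ ENNReal.ofReal ε𝓑)
    (ρ : EuclideanSpace ℝ (Fin n) → ℝ) (hρmeas : Measurable ρ)
    (x : EuclideanSpace ℝ (Fin n))
    (c : ℝ) (hc : 0 < c)
    (hbdd : ∀ δx ∈ 𝓑, |ρ (x + δx) - ρ x| ≤ c)
    (μu : ℝ) (hμu : μu = ∫ δx, (ρ (x + δx) - ρ x) ∂Pu)
    (νu : ℝ) (hνu : νu = variance (fun δx => ρ (x + δx) - ρ x) Pu)
    (φ : ℝ) (hφ : φ ∈ Set.Ioo ε𝓑 1)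
    (κ : ℝ) (hκ : κ = Real.log (C * V𝓑 / (φ - ε𝓑)))
    (γ : ℝ) (hγ : γ = 2 / 3 * c * κ)
    (ξH : ℝ) (hξH : ξH = c * Real.sqrt (2 * κ))
    (ξB : ℝ) (hξB : ξB = γ + Real.sqrt (γ ^ 2 + 2 * κ * νu))
    (hmargin : -μu + min ξH ξB < ρ x) :
    1 - φ ≤ (PD {δx | 0 < ρ (x + δx)}).toReal :=
  boxed_samplewise_perturbation_certificate_general n l u 𝓑 h𝓑 V𝓑 PD Pu hPu C ε𝓑 hε hdom hout ρ
    hρmeas x c hc hbdd μu hμu νu hνu φ hφ κ hκ γ hγ ξH hξH ξB hξB hmargin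
end
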